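/- arXiv:1910.02305 — 8 statements merged into one kernel-verified Lean document; each statement's English description precedes it below -/
import Mathlib

section
/- The incidence hypergraph Ω with vertex set {T_v, F_v}, edge set {T_e, F_e}, and exactly five incidences — one 'true' incidence between T_v and T_e, and one additional incidence between each of the four vertex-edge pairs (T_v,T_e), (T_v,F_e), (F_v,T_e), (F_v,F_e) — together with the monomorphism t : 1_R → Ω selecting the true vertex, true edge, and true incidence, is a subobject classifier for the category R of incidence hypergraphs: for every monomorphism φ : H → G there is a unique morphism χ : G → Ω such that H is the pullback of t along χ. -/
open CategoryTheory Limits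

/-- An incidence hypergraph: vertices, edges, incidences, and two structure maps. -/
structure IncHG : Type 1 where
  V : Type
  E : Type
  I : Type
  vmap : I → V
  emap : I → E

/-- A homomorphism of incidence hypergraphs. -/
@[ext]
structure IncHG.Hom (G H : IncHG) where
  fV : G.V → H.V
  fE : G.E → H.E
  fI : G.I → H.I
  comm_v : ∀ i, H.vmap (fI i) = fV (G.vmap i)
  comm_e : ∀ i, H.emap (fI i) = fE (G.emap i)

instance : Category IncHG where
  Hom := IncHG.Hom
  id G := ⟨id, id, id, fun _ => rfl, fun _ => rfl⟩
  comp f g := ⟨g.fV ∘ f.fV, g.fE ∘ f.fE, g.fI ∘ f.fI,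
    fun i => by simp [IncHG.Hom.comm_v], fun i => by simp [IncHG.Hom.comm_e]⟩
  id_comp f := rfl
  comp_id f := rfl
  assoc f g h := rfl

/-- The terminal incidence hypergraph: one vertex, one edge, one incidence. -/
def unitIH : IncHG := ⟨PUnit, PUnit, PUnit, fun _ => PUnit.unit, fun _ => PUnit.unit⟩

/-- The subobject classifier candidate `Ω`: two vertices (`true` = T_v, `false` = F_v),
two edges, and five incidences: `none` is the 'true' incidence between the true vertex
and true edge, and `some (v, e)` is the additional ('false') incidence between the
vertex `v` and edge `e`, one for each of the four vertex-edge pairs. -/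
def OmegaIH : IncHG where
  V := Bool
  E := Bool
  I := Option (Bool × Bool)
  vmap := fun i => match i with | none => true | some p => p.1
  emap := fun i => match i with | none => true | some p => p.2

/-- The 'true' morphism, selecting the true vertex, true edge, and true incidence. -/
def truthIH : unitIH ⟶ OmegaIH :=
  ⟨fun _ => true, fun _ => true, fun _ => none, fun _ => rfl, fun _ => rfl⟩

/-- The unique morphism to the terminal object. -/
def toUnitIH (H : IncHG) : H ⟶ unitIH :=
  ⟨fun _ => PUnit.unit, fun _ => PUnit.unit, fun _ => PUnit.unit,
    fun _ => rfl, fun _ => rfl⟩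

/-!
A morphism `χ : G ⟶ Ω` is determined by the vertices and edges it sends to `true` and the
incidences it sends to the true incidence: any other incidence `i` can only go to the false
incidence between `χ (ς i)` and `χ (ω i)`. Testing the pullback square against a single vertex,
edge or incidence shows that these three sets are exactly the images of `φ`, so `χ` is unique.
Conversely, the characteristic map of the images makes the square a pullback: a monomorphism is
injective on vertices and edges, so anything landing in the images factors through `φ`.
-/

namespace IncHG

variable {G H K : IncHG}

instance (G : IncHG) : Subsingleton (G ⟶ unitIH) :=
  ⟨fun _ _ => Hom.ext (funext fun _ => rfl) (funext fun _ => rfl) (funext fun _ => rfl)⟩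

def vertexIH : IncHG := ⟨PUnit, PEmpty, PEmpty, PEmpty.elim, PEmpty.elim⟩

def edgeIH : IncHG := ⟨PEmpty, PUnit, PEmpty, PEmpty.elim, PEmpty.elim⟩

def Hom.ofVertex (v : G.V) : vertexIH ⟶ G :=
  ⟨fun _ => v, PEmpty.elim, PEmpty.elim, fun i => i.elim, fun i => i.elim⟩

def Hom.ofEdge (e : G.E) : edgeIH ⟶ G :=
  ⟨PEmpty.elim, fun _ => e, PEmpty.elim, fun i => i.elim, fun i => i.elim⟩

def Hom.ofIncidence (i : G.I) : unitIH ⟶ G :=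
  ⟨fun _ => G.vmap i, fun _ => G.emap i, fun _ => i, fun _ => rfl, fun _ => rfl⟩

lemma vertexIH_hom_ext {f g : vertexIH ⟶ G} (h : f.fV ⟨⟩ = g.fV ⟨⟩) : f = g :=
  Hom.ext (funext fun _ => h) (funext fun (x : PEmpty) => x.elim)
    (funext fun (x : PEmpty) => x.elim)

lemma edgeIH_hom_ext {f g : edgeIH ⟶ G} (h : f.fE ⟨⟩ = g.fE ⟨⟩) : f = g :=
  Hom.ext (funext fun (x : PEmpty) => x.elim) (funext fun _ => h)
    (funext fun (x : PEmpty) => x.elim)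

lemma unitIH_hom_ext {f g : unitIH ⟶ G} (h : f.fI ⟨⟩ = g.fI ⟨⟩) : f = g := by
  apply Hom.ext <;> funext x
  · exact (f.comm_v x).symm.trans (h ▸ g.comm_v x)
  · exact (f.comm_e x).symm.trans (h ▸ g.comm_e x)
  · exact h

lemma injective_fV_of_mono (φ : H ⟶ G) [Mono φ] : Function.Injective φ.fV := fun a b h =>
  congrArg (fun f => f.fV ⟨⟩)
    ((cancel_mono φ).1
      (vertexIH_hom_ext (f := Hom.ofVertex a ≫ φ) (g := Hom.ofVertex b ≫ φ) h))

lemma injective_fE_of_mono (φ : H ⟶ G) [Mono φ] : Function.Injective φ.fE := fun a b h =>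
  congrArg (fun f => f.fE ⟨⟩)
    ((cancel_mono φ).1
      (edgeIH_hom_ext (f := Hom.ofEdge a ≫ φ) (g := Hom.ofEdge b ≫ φ) h))

lemma exists_comp_eq_of_forall_mem_range (φ : H ⟶ G) (hV : Function.Injective φ.fV)
    (hE : Function.Injective φ.fE) (f : K ⟶ G) (hfV : ∀ x, f.fV x ∈ Set.range φ.fV)
    (hfE : ∀ x, f.fE x ∈ Set.range φ.fE) (hfI : ∀ x, f.fI x ∈ Set.range φ.fI) :
    ∃ g : K ⟶ H, g ≫ φ = f := by
  choose gV hgV using hfV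
  choose gE hgE using hfE
  choose gI hgI using hfI
  refine ⟨⟨gV, gE, gI, fun i => hV ?_, fun i => hE ?_⟩,
    Hom.ext (funext hgV) (funext hgE) (funext hgI)⟩
  · rw [← φ.comm_v, hgI, f.comm_v, hgV]
  · rw [← φ.comm_e, hgI, f.comm_e, hgE]

lemma omegaIH_fI_eq_some {χ : G ⟶ OmegaIH} {i : G.I} (h : χ.fI i ≠ none) :
    χ.fI i = some (χ.fV (G.vmap i), χ.fE (G.emap i)) := by
  obtain ⟨p, hp⟩ := Option.ne_none_iff_exists'.1 h
  have hv := χ.comm_v i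
  have he := χ.comm_e i
  rw [hp] at hv he ⊢
  exact congrArg some (Prod.ext hv he)

lemma omegaIH_hom_ext {χ χ' : G ⟶ OmegaIH} (hV : ∀ v, χ.fV v = true ↔ χ'.fV v = true)
    (hE : ∀ e, χ.fE e = true ↔ χ'.fE e = true)
    (hI : ∀ i, χ.fI i = none ↔ χ'.fI i = none) :
    χ = χ' := by
  have hfV : χ.fV = χ'.fV := funext fun v => Bool.eq_iff_iff.2 (hV v)
  have hfE : χ.fE = χ'.fE := funext fun e => Bool.eq_iff_iff.2 (hE e)
  refine Hom.ext hfV hfE (funext fun i => ?_)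
  by_cases h : χ.fI i = none
  · rw [h, (hI i).1 h]
  · rw [omegaIH_fI_eq_some h, omegaIH_fI_eq_some (mt (hI i).2 h), hfV, hfE]

section Pullback

variable {φ : H ⟶ G} {χ : G ⟶ OmegaIH}

lemma fV_eq_true_iff_of_isPullback (hp : IsPullback φ (toUnitIH H) χ truthIH) (v : G.V) :
    χ.fV v = true ↔ v ∈ Set.range φ.fV := by
  refine ⟨fun hv => ?_, fun ⟨w, hw⟩ => hw ▸ congrArg (fun f => f.fV w) hp.w⟩
  have hc : Hom.ofVertex v ≫ χ = toUnitIH vertexIH ≫ truthIH := vertexIH_hom_ext hv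
  exact ⟨(hp.lift _ _ hc).fV ⟨⟩, congrArg (fun f => f.fV ⟨⟩) (hp.lift_fst _ _ hc)⟩

lemma fE_eq_true_iff_of_isPullback (hp : IsPullback φ (toUnitIH H) χ truthIH) (e : G.E) :
    χ.fE e = true ↔ e ∈ Set.range φ.fE := by
  refine ⟨fun he => ?_, fun ⟨w, hw⟩ => hw ▸ congrArg (fun f => f.fE w) hp.w⟩
  have hc : Hom.ofEdge e ≫ χ = toUnitIH edgeIH ≫ truthIH := edgeIH_hom_ext he
  exact ⟨(hp.lift _ _ hc).fE ⟨⟩, congrArg (fun f => f.fE ⟨⟩) (hp.lift_fst _ _ hc)⟩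

lemma fI_eq_none_iff_of_isPullback (hp : IsPullback φ (toUnitIH H) χ truthIH) (i : G.I) :
    χ.fI i = none ↔ i ∈ Set.range φ.fI := by
  refine ⟨fun hi => ?_, fun ⟨j, hj⟩ => hj ▸ congrArg (fun f => f.fI j) hp.w⟩
  have hc : Hom.ofIncidence i ≫ χ = toUnitIH unitIH ≫ truthIH := unitIH_hom_ext hi
  exact ⟨(hp.lift _ _ hc).fI ⟨⟩, congrArg (fun f => f.fI ⟨⟩) (hp.lift_fst _ _ hc)⟩

end Pullback

section Characteristic

open Classical

noncomputable def characteristicMap (φ : H ⟶ G) : G ⟶ OmegaIH where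
  fV v := decide (v ∈ Set.range φ.fV)
  fE e := decide (e ∈ Set.range φ.fE)
  fI i := if i ∈ Set.range φ.fI then none
    else some (decide (G.vmap i ∈ Set.range φ.fV), decide (G.emap i ∈ Set.range φ.fE))
  comm_v i := by
    by_cases h : i ∈ Set.range φ.fI
    · obtain ⟨j, rfl⟩ := h
      simpa [OmegaIH] using ⟨_, (φ.comm_v j).symm⟩
    · simp [OmegaIH, h]
  comm_e i := by
    by_cases h : i ∈ Set.range φ.fI
    · obtain ⟨j, rfl⟩ := h
      simpa [OmegaIH] using ⟨_, (φ.comm_e j).symm⟩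
    · simp [OmegaIH, h]

lemma characteristicMap_fV_eq_true_iff (φ : H ⟶ G) (v : G.V) :
    (characteristicMap φ).fV v = true ↔ v ∈ Set.range φ.fV :=
  decide_eq_true_iff

lemma characteristicMap_fE_eq_true_iff (φ : H ⟶ G) (e : G.E) :
    (characteristicMap φ).fE e = true ↔ e ∈ Set.range φ.fE :=
  decide_eq_true_iff

lemma characteristicMap_fI_eq_none_iff (φ : H ⟶ G) (i : G.I) :
    (characteristicMap φ).fI i = none ↔ i ∈ Set.range φ.fI := by
  change ite _ _ _ = none ↔ _
  split_ifs with h <;> simp [h]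

end Characteristic

lemma isPullback_characteristicMap (φ : H ⟶ G) [Mono φ] :
    IsPullback φ (toUnitIH H) (characteristicMap φ) truthIH := by
  have w : φ ≫ characteristicMap φ = toUnitIH H ≫ truthIH :=
    Hom.ext (funext fun v => (characteristicMap_fV_eq_true_iff φ _).2 ⟨v, rfl⟩)
      (funext fun e => (characteristicMap_fE_eq_true_iff φ _).2 ⟨e, rfl⟩)
      (funext fun j => (characteristicMap_fI_eq_none_iff φ _).2 ⟨j, rfl⟩)
  have factor (s : PullbackCone (characteristicMap φ) truthIH) :
      ∃ g : s.pt ⟶ H, g ≫ φ = s.fst :=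
    exists_comp_eq_of_forall_mem_range φ (injective_fV_of_mono φ) (injective_fE_of_mono φ) s.fst
      (fun x => (characteristicMap_fV_eq_true_iff φ _).1 (congrArg (fun f => f.fV x) s.condition))
      (fun x => (characteristicMap_fE_eq_true_iff φ _).1 (congrArg (fun f => f.fE x) s.condition))
      (fun x => (characteristicMap_fI_eq_none_iff φ _).1 (congrArg (fun f => f.fI x) s.condition))
  exact IsPullback.of_isLimit (c := PullbackCone.mk _ _ w) (PullbackCone.IsLimit.mk _
    (fun s => (factor s).choose) (fun s => (factor s).choose_spec) (fun _ => Subsingleton.elim _ _)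
    (fun s m hm _ => (cancel_mono φ).1 (hm.trans (factor s).choose_spec.symm)))

end IncHG

open IncHG

/-- `Ω` with `truthIH` is a subobject classifier: every monomorphism `φ : H ⟶ G` admits
a unique characteristic morphism `χ : G ⟶ Ω` making `H` the pullback of `truthIH`
along `χ`. -/
theorem omegaIH_subobjectClassifier (G H : IncHG) (φ : H ⟶ G) [Mono φ] :
    ∃! χ : G ⟶ OmegaIH, IsPullback φ (toUnitIH H) χ truthIH := by
  have hφ := isPullback_characteristicMap φ
  refine ⟨characteristicMap φ, hφ,
    fun χ hχ => omegaIH_hom_ext (fun v => ?_) (fun e => ?_) (fun i => ?_)⟩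
  · rw [fV_eq_true_iff_of_isPullback hχ, fV_eq_true_iff_of_isPullback hφ]
  · rw [fE_eq_true_iff_of_isPullback hχ, fE_eq_true_iff_of_isPullback hφ]
  · rw [fI_eq_none_iff_of_isPullback hχ, fI_eq_none_iff_of_isPullback hφ]
end

section
/- For any incidence hypergraph G, the hypergraph G̃ obtained by adding one new vertex ∗, one new edge ⋆, and for every vertex-edge pair (v,e) of G̃ one new incidence from v to e, together with the inclusion η_G : G → G̃, is a partial morphism representer: for any monomorphism φ : H → K and any morphism ψ : H → G, there is a unique morphism ψ̂ : K → G̃ such that the square with φ, ψ, ψ̂, η_G is a pullback. -/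
open CategoryTheory Limits

/-- The extension `G̃` of `G`: one new vertex (`none`), one new edge (`none`), and
one new incidence `Sum.inr (v, e)` for every vertex-edge pair `(v, e)` of `G̃`. -/
def tildeIH (G : IncHG) : IncHG where
  V := Option G.V
  E := Option G.E
  I := G.I ⊕ (Option G.V × Option G.E)
  vmap := fun a => match a with | .inl i => some (G.vmap i) | .inr p => p.1
  emap := fun a => match a with | .inl i => some (G.emap i) | .inr p => p.2

/-- The canonical inclusion `η_G : G ⟶ G̃`. -/
def etaIH (G : IncHG) : G ⟶ tildeIH G :=
  ⟨some, some, Sum.inl, fun _ => rfl, fun _ => rfl⟩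

/-! Pulling `η_G` back along `χ : K ⟶ G̃` gives the part of `K` that `χ` sends into `G`, i.e. the
cells not sent to `∗`, `⋆` or a new incidence. As the components of a monomorphism are injective,
the square is a pullback exactly when `φ` maps `H` onto that part and `ψ` agrees with `χ` on it
(`ClassifiesPartialMap`). This forces `χ` to be `ψ` on the image of `φ`, `∗` and `⋆` on the other
vertices and edges, and the new incidence between the images of its ends on every other
incidence; that this assignment is a morphism is exactly what the new incidences of `G̃` provide. -/

namespace IncHG

open Function Set

def freeVertex : IncHG := ⟨PUnit, PEmpty, PEmpty, PEmpty.elim, PEmpty.elim⟩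

def freeEdge : IncHG := ⟨PEmpty, PUnit, PEmpty, PEmpty.elim, PEmpty.elim⟩

def freeIncidence : IncHG := ⟨PUnit, PUnit, PUnit, fun _ => ⟨⟩, fun _ => ⟨⟩⟩

def vertexPt {A : IncHG} (v : A.V) : freeVertex ⟶ A :=
  ⟨fun _ => v, PEmpty.elim, PEmpty.elim, fun i => i.elim, fun i => i.elim⟩

def edgePt {A : IncHG} (e : A.E) : freeEdge ⟶ A :=
  ⟨PEmpty.elim, fun _ => e, PEmpty.elim, fun i => i.elim, fun i => i.elim⟩

def incidencePt {A : IncHG} (i : A.I) : freeIncidence ⟶ A :=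
  ⟨fun _ => A.vmap i, fun _ => A.emap i, fun _ => i, fun _ => rfl, fun _ => rfl⟩

theorem mono_iff_injective {A B : IncHG} (φ : A ⟶ B) :
    Mono φ ↔ Injective φ.fV ∧ Injective φ.fE ∧ Injective φ.fI := by
  constructor
  · intro _
    refine ⟨fun x y h => ?_, fun x y h => ?_, fun x y h => ?_⟩
    · have := (cancel_mono φ).1 (Hom.ext (x := vertexPt x ≫ φ) (y := vertexPt y ≫ φ)
        (funext fun _ => h) (funext (·.elim)) (funext (·.elim)))
      exact congrArg (·.fV ⟨⟩) this
    · have := (cancel_mono φ).1 (Hom.ext (x := edgePt x ≫ φ) (y := edgePt y ≫ φ)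
        (funext (·.elim)) (funext fun _ => h) (funext (·.elim)))
      exact congrArg (·.fE ⟨⟩) this
    · have := (cancel_mono φ).1 (Hom.ext (x := incidencePt x ≫ φ) (y := incidencePt y ≫ φ)
        (funext fun _ => (φ.comm_v x).symm.trans ((congrArg B.vmap h).trans (φ.comm_v y)))
        (funext fun _ => (φ.comm_e x).symm.trans ((congrArg B.emap h).trans (φ.comm_e y)))
        (funext fun _ => h))
      exact congrArg (·.fI ⟨⟩) this
  · rintro ⟨hV, hE, hI⟩
    refine ⟨fun f g w => Hom.ext ?_ ?_ ?_⟩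
    · exact funext fun x => hV (congrArg (·.fV x) w)
    · exact funext fun x => hE (congrArg (·.fE x) w)
    · exact funext fun x => hI (congrArg (·.fI x) w)

theorem exists_comp_eq_of_range {W H K : IncHG} {φ : H ⟶ K} (hV : Injective φ.fV)
    (hE : Injective φ.fE) (b : W ⟶ K) (bV : ∀ x, b.fV x ∈ range φ.fV)
    (bE : ∀ x, b.fE x ∈ range φ.fE) (bI : ∀ x, b.fI x ∈ range φ.fI) :
    ∃ l : W ⟶ H, l ≫ φ = b := by
  choose lV hlV using bV
  choose lE hlE using bE
  choose lI hlI using bI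
  refine ⟨⟨lV, lE, lI, fun i => hV ?_, fun i => hE ?_⟩,
    Hom.ext (funext hlV) (funext hlE) (funext hlI)⟩
  · rw [← φ.comm_v, hlI, hlV, b.comm_v]
  · rw [← φ.comm_e, hlI, hlE, b.comm_e]

theorem _root_.Function.Injective.eq_extend {α β γ : Type*} {f : α → β} (hf : Injective f)
    {g : α → γ} {e' : β → γ} {χ : β → γ} (h : χ ∘ f = g) (h' : ∀ b, (¬∃ a, f a = b) → χ b = e' b) :
    χ = extend f g e' := by
  funext b
  by_cases hb : ∃ a, f a = b
  · obtain ⟨a, rfl⟩ := hb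
    rw [hf.extend_apply]
    exact congrFun h a
  · rw [extend_apply' _ _ _ hb]
    exact h' b hb

section Classifier

variable {G H K : IncHG} (φ : H ⟶ K) (ψ : H ⟶ G)

structure ClassifiesPartialMap (χ : K ⟶ tildeIH G) : Prop where
  w : ψ ≫ etaIH G = φ ≫ χ
  mem_range_fV : ∀ k g, χ.fV k = some g → k ∈ range φ.fV
  mem_range_fE : ∀ k g, χ.fE k = some g → k ∈ range φ.fE
  mem_range_fI : ∀ k g, χ.fI k = .inl g → k ∈ range φ.fI

theorem _root_.CategoryTheory.IsPullback.classifiesPartialMap {χ : K ⟶ tildeIH G}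
    (h : IsPullback ψ φ (etaIH G) χ) : ClassifiesPartialMap φ ψ χ := by
  refine ⟨h.w, fun k g hk => ?_, fun k g hk => ?_, fun k g hk => ?_⟩
  · have sq : vertexPt g ≫ etaIH G = vertexPt k ≫ χ :=
      Hom.ext (funext fun _ => hk.symm) (funext (·.elim)) (funext (·.elim))
    exact ⟨(h.lift _ _ sq).fV ⟨⟩, congrArg (·.fV ⟨⟩) (h.lift_snd _ _ sq)⟩
  · have sq : edgePt g ≫ etaIH G = edgePt k ≫ χ :=
      Hom.ext (funext (·.elim)) (funext fun _ => hk.symm) (funext (·.elim))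
    exact ⟨(h.lift _ _ sq).fE ⟨⟩, congrArg (·.fE ⟨⟩) (h.lift_snd _ _ sq)⟩
  · have sq : incidencePt g ≫ etaIH G = incidencePt k ≫ χ :=
      Hom.ext (funext fun _ => (congrArg (tildeIH G).vmap hk).symm.trans (χ.comm_v k))
        (funext fun _ => (congrArg (tildeIH G).emap hk).symm.trans (χ.comm_e k))
        (funext fun _ => hk.symm)
    exact ⟨(h.lift _ _ sq).fI ⟨⟩, congrArg (·.fI ⟨⟩) (h.lift_snd _ _ sq)⟩

theorem ClassifiesPartialMap.isPullback [Mono φ] {χ : K ⟶ tildeIH G}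
    (h : ClassifiesPartialMap φ ψ χ) : IsPullback ψ φ (etaIH G) χ := by
  obtain ⟨hV, hE, -⟩ := (mono_iff_injective φ).1 ‹_›
  have : Mono (etaIH G) := (mono_iff_injective _).2
    ⟨Option.some_injective _, Option.some_injective _, Sum.inl_injective⟩
  have exists_lift (s : PullbackCone (etaIH G) χ) : ∃ l, l ≫ φ = s.snd :=
    exists_comp_eq_of_range hV hE s.snd
      (fun x => h.mem_range_fV _ (s.fst.fV x) (congrArg (·.fV x) s.condition).symm)
      (fun x => h.mem_range_fE _ (s.fst.fE x) (congrArg (·.fE x) s.condition).symm)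
      (fun x => h.mem_range_fI _ (s.fst.fI x) (congrArg (·.fI x) s.condition).symm)
  choose lift hlift using exists_lift
  refine .of_isLimit' ⟨h.w⟩ (PullbackCone.IsLimit.mk h.w lift (fun s => ?_) hlift
    fun s m _ hm => (cancel_mono φ).1 (hm.trans (hlift s).symm))
  rw [← cancel_mono (etaIH G), Category.assoc, h.w, ← Category.assoc, hlift, ← s.condition]

noncomputable def classifierV : K.V → (tildeIH G).V := extend φ.fV (ψ ≫ etaIH G).fV fun _ => none

noncomputable def classifierE : K.E → (tildeIH G).E := extend φ.fE (ψ ≫ etaIH G).fE fun _ => none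

noncomputable def classifierI : K.I → (tildeIH G).I :=
  extend φ.fI (ψ ≫ etaIH G).fI fun k =>
    .inr (classifierV φ ψ (K.vmap k), classifierE φ ψ (K.emap k))

theorem classifierV_apply [Mono φ] (x : H.V) : classifierV φ ψ (φ.fV x) = some (ψ.fV x) :=
  ((mono_iff_injective φ).1 ‹_›).1.extend_apply _ _ x

theorem classifierE_apply [Mono φ] (x : H.E) : classifierE φ ψ (φ.fE x) = some (ψ.fE x) :=
  ((mono_iff_injective φ).1 ‹_›).2.1.extend_apply _ _ x

theorem classifierI_apply [Mono φ] (x : H.I) : classifierI φ ψ (φ.fI x) = .inl (ψ.fI x) :=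
  ((mono_iff_injective φ).1 ‹_›).2.2.extend_apply _ _ x

theorem classifierV_of_notMem {k : K.V} (hk : k ∉ range φ.fV) : classifierV φ ψ k = none :=
  extend_apply' _ _ _ hk

theorem classifierE_of_notMem {k : K.E} (hk : k ∉ range φ.fE) : classifierE φ ψ k = none :=
  extend_apply' _ _ _ hk

theorem classifierI_of_notMem {k : K.I} (hk : k ∉ range φ.fI) :
    classifierI φ ψ k = .inr (classifierV φ ψ (K.vmap k), classifierE φ ψ (K.emap k)) :=
  extend_apply' _ _ _ hk

noncomputable def classifier [Mono φ] : K ⟶ tildeIH G where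
  fV := classifierV φ ψ
  fE := classifierE φ ψ
  fI := classifierI φ ψ
  comm_v k := by
    by_cases hk : k ∈ range φ.fI
    · obtain ⟨x, rfl⟩ := hk
      rw [classifierI_apply, φ.comm_v, classifierV_apply]
      exact congrArg some (ψ.comm_v x)
    · rw [classifierI_of_notMem φ ψ hk]
      rfl
  comm_e k := by
    by_cases hk : k ∈ range φ.fI
    · obtain ⟨x, rfl⟩ := hk
      rw [classifierI_apply, φ.comm_e, classifierE_apply]
      exact congrArg some (ψ.comm_e x)
    · rw [classifierI_of_notMem φ ψ hk]
      rfl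

theorem classifiesPartialMap_classifier [Mono φ] : ClassifiesPartialMap φ ψ (classifier φ ψ) where
  w := Hom.ext (funext fun x => (classifierV_apply φ ψ x).symm)
    (funext fun x => (classifierE_apply φ ψ x).symm) (funext fun x => (classifierI_apply φ ψ x).symm)
  mem_range_fV k g hk := by
    by_contra hk'
    exact Option.some_ne_none g (hk.symm.trans (classifierV_of_notMem φ ψ hk'))
  mem_range_fE k g hk := by
    by_contra hk'
    exact Option.some_ne_none g (hk.symm.trans (classifierE_of_notMem φ ψ hk'))
  mem_range_fI k g hk := by
    by_contra hk'
    exact Sum.inl_ne_inr (hk.symm.trans (classifierI_of_notMem φ ψ hk'))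

theorem ClassifiesPartialMap.eq_classifier [Mono φ] {χ : K ⟶ tildeIH G}
    (h : ClassifiesPartialMap φ ψ χ) : χ = classifier φ ψ := by
  obtain ⟨hV, hE, hI⟩ := (mono_iff_injective φ).1 ‹_›
  have eqV : χ.fV = classifierV φ ψ := hV.eq_extend (congrArg Hom.fV h.w).symm fun k hk =>
    Option.eq_none_iff_forall_ne_some.2 fun g hg => hk (h.mem_range_fV k g hg)
  have eqE : χ.fE = classifierE φ ψ := hE.eq_extend (congrArg Hom.fE h.w).symm fun k hk =>
    Option.eq_none_iff_forall_ne_some.2 fun g hg => hk (h.mem_range_fE k g hg)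
  refine Hom.ext eqV eqE (hI.eq_extend (congrArg Hom.fI h.w).symm fun k hk => ?_)
  -- off the image of `φ`, `χ.fI k` is a new incidence, and those are determined by their ends
  rw [← eqV, ← eqE, ← χ.comm_v, ← χ.comm_e]
  rcases hχ : χ.fI k with g | p
  · exact (hk (h.mem_range_fI k g hχ)).elim
  · rfl

end Classifier

end IncHG

/-- `G̃` with `η_G` represents partial morphisms: for any monomorphism `φ : H ⟶ K` and
any morphism `ψ : H ⟶ G`, there is a unique `ψ̂ : K ⟶ G̃` making the square
`(ψ, φ, η_G, ψ̂)` a pullback. -/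
theorem tildeIH_partialMorphismRepresenter (G H K : IncHG) (φ : H ⟶ K) [Mono φ]
    (ψ : H ⟶ G) :
    ∃! ψh : K ⟶ tildeIH G, IsPullback ψ φ (etaIH G) ψh :=
  ⟨IncHG.classifier φ ψ, (IncHG.classifiesPartialMap_classifier φ ψ).isPullback,
    fun _ hχ => hχ.classifiesPartialMap.eq_classifier⟩
end

section
/- An incidence hypergraph G is injective with respect to monomorphisms in the category of incidence hypergraphs if and only if V(G) ≠ ∅, E(G) ≠ ∅, and for every vertex v ∈ V(G) and every edge e ∈ E(G) there exists an incidence i ∈ I(G) with ς_G(i) = v and ω_G(i) = e. -/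
open CategoryTheory Limits

namespace IncHGAux

/-- One vertex, nothing else. -/
def Pt : IncHG := ⟨PUnit, Empty, Empty, fun i => i.elim, fun i => i.elim⟩
/-- One edge, nothing else. -/
def Ed : IncHG := ⟨Empty, PUnit, Empty, fun i => i.elim, fun i => i.elim⟩
/-- Walking incidence. -/
def Wk : IncHG := ⟨PUnit, PUnit, PUnit, fun _ => ⟨⟩, fun _ => ⟨⟩⟩
/-- One vertex and one edge, no incidence. -/
def VE : IncHG := ⟨PUnit, PUnit, Empty, fun i => i.elim, fun i => i.elim⟩
/-- Empty hypergraph. -/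
def Emp : IncHG := ⟨Empty, Empty, Empty, fun i => i.elim, fun i => i.elim⟩

def ptHom (X : IncHG) (x : X.V) : Pt ⟶ X :=
  ⟨fun _ => x, fun i => i.elim, fun i => i.elim, fun i => i.elim, fun i => i.elim⟩

def edHom (X : IncHG) (e : X.E) : Ed ⟶ X :=
  ⟨fun i => i.elim, fun _ => e, fun i => i.elim, fun i => i.elim, fun i => i.elim⟩

def wkHom (X : IncHG) (i : X.I) : Wk ⟶ X :=
  ⟨fun _ => X.vmap i, fun _ => X.emap i, fun _ => i, fun _ => rfl, fun _ => rfl⟩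

open Classical in
noncomputable def extFun {A B C : Type} [Nonempty C] (φ : A → B) (ψ : A → C) : B → C :=
  fun b => if h : ∃ a, φ a = b then ψ h.choose else Classical.arbitrary C

theorem extFun_spec {A B C : Type} [Nonempty C] {φ : A → B}
    (hφ : Function.Injective φ) (ψ : A → C) (a : A) : extFun φ ψ (φ a) = ψ a := by
  have h : ∃ a', φ a' = φ a := ⟨a, rfl⟩
  unfold extFun
  rw [dif_pos h]
  exact congrArg ψ (hφ h.choose_spec)

end IncHGAux

open IncHGAux

/-- An incidence hypergraph is injective with respect to monomorphisms iff it has a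
vertex, has an edge, and every vertex-edge pair is joined by some incidence. -/
theorem injective_iff (G : IncHG) :
    Injective G ↔
      Nonempty G.V ∧ Nonempty G.E ∧
        ∀ (v : G.V) (e : G.E), ∃ i : G.I, G.vmap i = v ∧ G.emap i = e := by
  constructor
  · intro hG
    -- the unique map out of the empty hypergraph is mono into anything
    have empMono : ∀ (K : IncHG) (m : Emp ⟶ K), Mono m := by
      intro K m
      refine ⟨fun {W} a b _ => ?_⟩
      refine IncHG.Hom.ext ?_ ?_ ?_ <;> funext x
      · exact (a.fV x).elim
      · exact (a.fE x).elim
      · exact (a.fI x).elim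
    have empG : Emp ⟶ G :=
      ⟨fun i => i.elim, fun i => i.elim, fun i => i.elim, fun i => i.elim, fun i => i.elim⟩
    refine ⟨?_, ?_, ?_⟩
    · -- a vertex
      let m : Emp ⟶ Pt :=
        ⟨fun i => i.elim, fun i => i.elim, fun i => i.elim, fun i => i.elim, fun i => i.elim⟩
      haveI := empMono Pt m
      obtain ⟨α, -⟩ := hG.factors empG m
      exact ⟨α.fV ⟨⟩⟩
    · -- an edge
      let m : Emp ⟶ Ed :=
        ⟨fun i => i.elim, fun i => i.elim, fun i => i.elim, fun i => i.elim, fun i => i.elim⟩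
      haveI := empMono Ed m
      obtain ⟨α, -⟩ := hG.factors empG m
      exact ⟨α.fE ⟨⟩⟩
    · intro v e
      let m : VE ⟶ Wk := ⟨id, id, fun i => i.elim, fun i => i.elim, fun i => i.elim⟩
      haveI : Mono m := by
        refine ⟨fun {W} a b _ => ?_⟩
        refine IncHG.Hom.ext ?_ ?_ ?_ <;> funext x
        · exact Subsingleton.elim (α := PUnit) _ _
        · exact Subsingleton.elim (α := PUnit) _ _
        · exact (a.fI x).elim
      let ψ : VE ⟶ G :=
        ⟨fun _ => v, fun _ => e, fun i => i.elim, fun i => i.elim, fun i => i.elim⟩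
      obtain ⟨α, hα⟩ := hG.factors ψ m
      refine ⟨α.fI ⟨⟩, ?_, ?_⟩
      · have h1 : G.vmap (α.fI ⟨⟩) = α.fV ⟨⟩ := α.comm_v ⟨⟩
        have h2 : α.fV ⟨⟩ = v := congrFun (congrArg IncHG.Hom.fV hα) ⟨⟩
        rw [h1, h2]
      · have h1 : G.emap (α.fI ⟨⟩) = α.fE ⟨⟩ := α.comm_e ⟨⟩
        have h2 : α.fE ⟨⟩ = e := congrFun (congrArg IncHG.Hom.fE hα) ⟨⟩
        rw [h1, h2]
  · rintro ⟨⟨v0⟩, ⟨e0⟩, hpair⟩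
    haveI : Nonempty G.V := ⟨v0⟩
    haveI : Nonempty G.E := ⟨e0⟩
    refine ⟨fun {X Y} g f hf => ?_⟩
    classical
    -- mono implies componentwise injective
    have hV : Function.Injective f.fV := by
      intro x1 x2 hx
      have : ptHom X x1 ≫ f = ptHom X x2 ≫ f := by
        refine IncHG.Hom.ext ?_ ?_ ?_ <;> funext u
        · exact hx
        · exact u.elim
        · exact u.elim
      have h := (cancel_mono f).mp this
      exact congrFun (congrArg IncHG.Hom.fV h) ⟨⟩
    have hE : Function.Injective f.fE := by
      intro x1 x2 hx
      have : edHom X x1 ≫ f = edHom X x2 ≫ f := by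
        refine IncHG.Hom.ext ?_ ?_ ?_ <;> funext u
        · exact u.elim
        · exact hx
        · exact u.elim
      have h := (cancel_mono f).mp this
      exact congrFun (congrArg IncHG.Hom.fE h) ⟨⟩
    have hI : Function.Injective f.fI := by
      intro i1 i2 hx
      have : wkHom X i1 ≫ f = wkHom X i2 ≫ f := by
        refine IncHG.Hom.ext ?_ ?_ ?_ <;> funext u
        · show f.fV (X.vmap i1) = f.fV (X.vmap i2)
          rw [← f.comm_v i1, ← f.comm_v i2, hx]
        · show f.fE (X.emap i1) = f.fE (X.emap i2)
          rw [← f.comm_e i1, ← f.comm_e i2, hx]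
        · exact hx
      have h := (cancel_mono f).mp this
      exact congrFun (congrArg IncHG.Hom.fI h) ⟨⟩
    -- build the extension
    let hVf : Y.V → G.V := extFun f.fV g.fV
    let hEf : Y.E → G.E := extFun f.fE g.fE
    let hIf : Y.I → G.I := fun i =>
      if h : ∃ j, f.fI j = i then g.fI h.choose
      else (hpair (hVf (Y.vmap i)) (hEf (Y.emap i))).choose
    have comm_v : ∀ i, G.vmap (hIf i) = hVf (Y.vmap i) := by
      intro i
      by_cases h : ∃ j, f.fI j = i
      · simp only [hIf, dif_pos h]
        have hj : f.fI h.choose = i := h.choose_spec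
        have h1 : G.vmap (g.fI h.choose) = g.fV (X.vmap h.choose) := g.comm_v _
        have h2 : Y.vmap i = f.fV (X.vmap h.choose) := by
          rw [← f.comm_v h.choose, hj]
        rw [h1, h2]
        exact (extFun_spec hV g.fV _).symm
      · simp only [hIf, dif_neg h]
        exact (hpair (hVf (Y.vmap i)) (hEf (Y.emap i))).choose_spec.1
    have comm_e : ∀ i, G.emap (hIf i) = hEf (Y.emap i) := by
      intro i
      by_cases h : ∃ j, f.fI j = i
      · simp only [hIf, dif_pos h]
        have hj : f.fI h.choose = i := h.choose_spec
        have h1 : G.emap (g.fI h.choose) = g.fE (X.emap h.choose) := g.comm_e _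
        have h2 : Y.emap i = f.fE (X.emap h.choose) := by
          rw [← f.comm_e h.choose, hj]
        rw [h1, h2]
        exact (extFun_spec hE g.fE _).symm
      · simp only [hIf, dif_neg h]
        exact (hpair (hVf (Y.vmap i)) (hEf (Y.emap i))).choose_spec.2
    refine ⟨⟨hVf, hEf, hIf, comm_v, comm_e⟩, ?_⟩
    refine IncHG.Hom.ext ?_ ?_ ?_ <;> funext x
    · exact extFun_spec hV g.fV x
    · exact extFun_spec hE g.fE x
    · show hIf (f.fI x) = g.fI x
      have h : ∃ j, f.fI j = f.fI x := ⟨x, rfl⟩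
      simp only [hIf, dif_pos h]
      exact congrArg g.fI (hI h.choose_spec)
end

section
/- A monomorphism φ : G → H of incidence hypergraphs is essential if and only if: (1) if V(G) ≠ ∅ then φ_V is bijective; (2) if V(G) = ∅ then |V(H)| ≤ 1; (3) if E(G) ≠ ∅ then φ_E is bijective; (4) if E(G) = ∅ then |E(H)| ≤ 1; (5) for every v ∈ V(G), e ∈ E(G) with inc_G(v,e) ≠ ∅, the image φ_I(inc_G(v,e)) equals inc_H(φ_V(v), φ_E(e)); and (6) for every x ∈ V(H), y ∈ E(H) such that no i ∈ I(G) satisfies (ς_H(φ_I(i)), ω_H(φ_I(i))) = (x,y), one has |inc_H(x,y)| ≤ 1. -/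
open CategoryTheory Limits

/-- The set of incidences between a vertex `v` and an edge `e`. -/
def IncHG.inc (G : IncHG) (v : G.V) (e : G.E) : Set G.I :=
  {i | G.vmap i = v ∧ G.emap i = e}

/-- A monomorphism is essential if every morphism whose precomposition with it is
monic is itself monic. -/
def IncHG.Essential {G H : IncHG} (φ : G ⟶ H) : Prop :=
  ∀ (K : IncHG) (α : H ⟶ K), Mono (φ ≫ α) → Mono α

lemma IncHG.mono_iff {G H : IncHG} (φ : G ⟶ H) :
    Mono φ ↔ (Function.Injective (IncHG.Hom.fV φ) ∧ Function.Injective (IncHG.Hom.fE φ) ∧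
      Function.Injective (IncHG.Hom.fI φ)) := by
  constructor
  · intro h
    refine ⟨?_, ?_, ?_⟩
    · intro a b hab
      let P : IncHG := ⟨PUnit, PEmpty, PEmpty, PEmpty.elim, PEmpty.elim⟩
      let α : P ⟶ G := ⟨fun _ => a, PEmpty.elim, PEmpty.elim, fun i => i.elim, fun i => i.elim⟩
      let β : P ⟶ G := ⟨fun _ => b, PEmpty.elim, PEmpty.elim, fun i => i.elim, fun i => i.elim⟩
      have hc : α ≫ φ = β ≫ φ := by
        apply IncHG.Hom.ext
        · funext x; exact hab
        · funext x; exact x.elim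
        · funext x; exact x.elim
      have := (cancel_mono φ).mp hc
      exact congrFun (congrArg IncHG.Hom.fV this) PUnit.unit
    · intro a b hab
      let P : IncHG := ⟨PEmpty, PUnit, PEmpty, PEmpty.elim, PEmpty.elim⟩
      let α : P ⟶ G := ⟨PEmpty.elim, fun _ => a, PEmpty.elim, fun i => i.elim, fun i => i.elim⟩
      let β : P ⟶ G := ⟨PEmpty.elim, fun _ => b, PEmpty.elim, fun i => i.elim, fun i => i.elim⟩
      have hc : α ≫ φ = β ≫ φ := by
        apply IncHG.Hom.ext
        · funext x; exact x.elim
        · funext x; exact hab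
        · funext x; exact x.elim
      have := (cancel_mono φ).mp hc
      exact congrFun (congrArg IncHG.Hom.fE this) PUnit.unit
    · intro a b hab
      let P : IncHG := ⟨PUnit, PUnit, PUnit, fun _ => PUnit.unit, fun _ => PUnit.unit⟩
      let α : P ⟶ G := ⟨fun _ => G.vmap a, fun _ => G.emap a, fun _ => a,
        fun _ => rfl, fun _ => rfl⟩
      let β : P ⟶ G := ⟨fun _ => G.vmap b, fun _ => G.emap b, fun _ => b,
        fun _ => rfl, fun _ => rfl⟩
      have hc : α ≫ φ = β ≫ φ := by
        apply IncHG.Hom.ext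
        · funext x
          show IncHG.Hom.fV φ (G.vmap a) = IncHG.Hom.fV φ (G.vmap b)
          rw [← IncHG.Hom.comm_v, ← IncHG.Hom.comm_v, hab]
        · funext x
          show IncHG.Hom.fE φ (G.emap a) = IncHG.Hom.fE φ (G.emap b)
          rw [← IncHG.Hom.comm_e, ← IncHG.Hom.comm_e, hab]
        · funext x; exact hab
      have := (cancel_mono φ).mp hc
      exact congrFun (congrArg IncHG.Hom.fI this) PUnit.unit
  · rintro ⟨h1, h2, h3⟩
    constructor
    intro Z α β h
    apply IncHG.Hom.ext
    · funext x
      exact h1 (congrFun (congrArg IncHG.Hom.fV h) x)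
    · funext x
      exact h2 (congrFun (congrArg IncHG.Hom.fE h) x)
    · funext x
      exact h3 (congrFun (congrArg IncHG.Hom.fI h) x)

/-- Characterization of essential monomorphisms of incidence hypergraphs. -/
theorem essential_iff (G H : IncHG) (φ : G ⟶ H) [Mono φ] :
    IncHG.Essential φ ↔
      ((Nonempty G.V → Function.Bijective (IncHG.Hom.fV φ)) ∧
       (IsEmpty G.V → Subsingleton H.V) ∧
       (Nonempty G.E → Function.Bijective (IncHG.Hom.fE φ)) ∧
       (IsEmpty G.E → Subsingleton H.E) ∧
       (∀ (v : G.V) (e : G.E), (G.inc v e).Nonempty →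
          IncHG.Hom.fI φ '' G.inc v e =
            H.inc (IncHG.Hom.fV φ v) (IncHG.Hom.fE φ e)) ∧
       (∀ (x : H.V) (y : H.E),
          (∀ i : G.I,
            ¬(H.vmap (IncHG.Hom.fI φ i) = x ∧ H.emap (IncHG.Hom.fI φ i) = y)) →
          (H.inc x y).Subsingleton)) := by
  classical
  obtain ⟨injV, injE, injI⟩ := (IncHG.mono_iff φ).mp ‹Mono φ›
  constructor
  · intro hess
    -- Key collapsing lemma for vertices
    have keyV : ∀ x : H.V, (∀ a, IncHG.Hom.fV φ a ≠ x) → ∀ t, x = t := by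
      intro x hx t
      by_contra hxt
      set f : H.V → H.V := fun z => if z = x then t else z with hf
      let K : IncHG := ⟨H.V, H.E, H.I, f ∘ H.vmap, H.emap⟩
      let α : H ⟶ K := ⟨f, id, id, fun _ => rfl, fun _ => rfl⟩
      have hmono : Mono (φ ≫ α) := by
        refine (IncHG.mono_iff _).mpr ⟨?_, injE, injI⟩
        intro a b hab
        have hab' : f (IncHG.Hom.fV φ a) = f (IncHG.Hom.fV φ b) := hab
        rw [hf] at hab'
        simp only [if_neg (hx a), if_neg (hx b)] at hab'
        exact injV hab'
      obtain ⟨aV, -, -⟩ := (IncHG.mono_iff α).mp (hess K α hmono)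
      have hcol : f x = f t := by
        rw [hf]
        simp only [if_neg (Ne.symm hxt)]
        exact if_pos trivial
      exact hxt (aV hcol)
    -- Key collapsing lemma for edges
    have keyE : ∀ x : H.E, (∀ a, IncHG.Hom.fE φ a ≠ x) → ∀ t, x = t := by
      intro x hx t
      by_contra hxt
      set f : H.E → H.E := fun z => if z = x then t else z with hf
      let K : IncHG := ⟨H.V, H.E, H.I, H.vmap, f ∘ H.emap⟩
      let α : H ⟶ K := ⟨id, f, id, fun _ => rfl, fun _ => rfl⟩
      have hmono : Mono (φ ≫ α) := by
        refine (IncHG.mono_iff _).mpr ⟨injV, ?_, injI⟩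
        intro a b hab
        have hab' : f (IncHG.Hom.fE φ a) = f (IncHG.Hom.fE φ b) := hab
        rw [hf] at hab'
        simp only [if_neg (hx a), if_neg (hx b)] at hab'
        exact injE hab'
      obtain ⟨-, aE, -⟩ := (IncHG.mono_iff α).mp (hess K α hmono)
      have hcol : f x = f t := by
        rw [hf]
        simp only [if_neg (Ne.symm hxt)]
        exact if_pos trivial
      exact hxt (aE hcol)
    -- Key collapsing lemma for incidences
    have keyI : ∀ j t : H.I, (∀ a, IncHG.Hom.fI φ a ≠ j) →
        H.vmap j = H.vmap t → H.emap j = H.emap t → j = t := by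
      intro j t hj hv he
      by_contra hjt
      set f : H.I → H.I := fun z => if z = j then t else z with hf
      let α : H ⟶ H := ⟨id, id, f, ?_, ?_⟩
      case refine_1 =>
        intro i
        show H.vmap (f i) = H.vmap i
        rw [hf]
        by_cases h : i = j
        · subst h; simp only [if_pos rfl]; exact hv.symm
        · simp only [if_neg h]
      case refine_2 =>
        intro i
        show H.emap (f i) = H.emap i
        rw [hf]
        by_cases h : i = j
        · subst h; simp only [if_pos rfl]; exact he.symm
        · simp only [if_neg h]
      have hmono : Mono (φ ≫ α) := by
        refine (IncHG.mono_iff _).mpr ⟨injV, injE, ?_⟩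
        intro a b hab
        have hab' : f (IncHG.Hom.fI φ a) = f (IncHG.Hom.fI φ b) := hab
        rw [hf] at hab'
        simp only [if_neg (hj a), if_neg (hj b)] at hab'
        exact injI hab'
      obtain ⟨-, -, aI⟩ := (IncHG.mono_iff α).mp (hess H α hmono)
      have hcol : f j = f t := by
        rw [hf]
        simp only [if_neg (Ne.symm hjt)]
        exact if_pos trivial
      exact hjt (aI hcol)
    refine ⟨?_, ?_, ?_, ?_, ?_, ?_⟩
    · rintro ⟨v0⟩
      refine ⟨injV, ?_⟩
      intro x
      by_contra hx
      have hne : ∀ a, IncHG.Hom.fV φ a ≠ x := fun a h => hx ⟨a, h⟩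
      exact hx ⟨v0, (keyV x hne (IncHG.Hom.fV φ v0)).symm⟩
    · intro hGV
      exact ⟨fun x t => keyV x (fun a => (hGV.false a).elim) t⟩
    · rintro ⟨e0⟩
      refine ⟨injE, ?_⟩
      intro x
      by_contra hx
      have hne : ∀ a, IncHG.Hom.fE φ a ≠ x := fun a h => hx ⟨a, h⟩
      exact hx ⟨e0, (keyE x hne (IncHG.Hom.fE φ e0)).symm⟩
    · intro hGE
      exact ⟨fun x t => keyE x (fun a => (hGE.false a).elim) t⟩
    · rintro v e ⟨i0, hi0⟩
      ext j
      constructor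
      · rintro ⟨a, ha, rfl⟩
        exact ⟨by rw [IncHG.Hom.comm_v, ha.1], by rw [IncHG.Hom.comm_e, ha.2]⟩
      · rintro ⟨hjv, hje⟩
        by_cases h : ∃ a, IncHG.Hom.fI φ a = j
        · obtain ⟨a, rfl⟩ := h
          refine ⟨a, ⟨?_, ?_⟩, rfl⟩
          · apply injV; rw [← IncHG.Hom.comm_v]; exact hjv
          · apply injE; rw [← IncHG.Hom.comm_e]; exact hje
        · push_neg at h
          have hv : H.vmap j = H.vmap (IncHG.Hom.fI φ i0) := by
            rw [IncHG.Hom.comm_v, hi0.1, hjv]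
          have he : H.emap j = H.emap (IncHG.Hom.fI φ i0) := by
            rw [IncHG.Hom.comm_e, hi0.2, hje]
          exact absurd (keyI j (IncHG.Hom.fI φ i0) h hv he).symm (h i0)
    · rintro x y hxy j hj j' hj'
      have hr : ∀ a, IncHG.Hom.fI φ a ≠ j := by
        intro a h
        exact hxy a ⟨by rw [h]; exact hj.1, by rw [h]; exact hj.2⟩
      exact keyI j j' hr (hj.1.trans hj'.1.symm) (hj.2.trans hj'.2.symm)
  · rintro ⟨c1, c2, c3, c4, c5, c6⟩ K α hmono
    obtain ⟨iV, iE, iI⟩ := (IncHG.mono_iff _).mp hmono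
    have aV : Function.Injective (IncHG.Hom.fV α) := by
      intro x x' h
      by_cases hV : Nonempty G.V
      · obtain ⟨binj, bsurj⟩ := c1 hV
        obtain ⟨a, rfl⟩ := bsurj x
        obtain ⟨a', rfl⟩ := bsurj x'
        exact congrArg (IncHG.Hom.fV φ) (iV h)
      · exact (c2 (not_nonempty_iff.mp hV)).elim x x'
    have aE : Function.Injective (IncHG.Hom.fE α) := by
      intro x x' h
      by_cases hE : Nonempty G.E
      · obtain ⟨binj, bsurj⟩ := c3 hE
        obtain ⟨a, rfl⟩ := bsurj x
        obtain ⟨a', rfl⟩ := bsurj x'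
        exact congrArg (IncHG.Hom.fE φ) (iE h)
      · exact (c4 (not_nonempty_iff.mp hE)).elim x x'
    refine (IncHG.mono_iff α).mpr ⟨aV, aE, ?_⟩
    intro j j' h
    have hv' : H.vmap j = H.vmap j' := by
      apply aV
      rw [← IncHG.Hom.comm_v α, ← IncHG.Hom.comm_v α, h]
    have he' : H.emap j = H.emap j' := by
      apply aE
      rw [← IncHG.Hom.comm_e α, ← IncHG.Hom.comm_e α, h]
    by_cases hcase : ∃ i, H.vmap (IncHG.Hom.fI φ i) = H.vmap j ∧
        H.emap (IncHG.Hom.fI φ i) = H.emap j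
    · obtain ⟨i, hiv, hie⟩ := hcase
      have hne : (G.inc (G.vmap i) (G.emap i)).Nonempty := ⟨i, rfl, rfl⟩
      have himg := c5 _ _ hne
      have hj : j ∈ H.inc (IncHG.Hom.fV φ (G.vmap i)) (IncHG.Hom.fE φ (G.emap i)) :=
        ⟨by rw [← IncHG.Hom.comm_v, hiv], by rw [← IncHG.Hom.comm_e, hie]⟩
      have hj' : j' ∈ H.inc (IncHG.Hom.fV φ (G.vmap i)) (IncHG.Hom.fE φ (G.emap i)) :=
        ⟨by rw [← IncHG.Hom.comm_v, hiv, hv'], by rw [← IncHG.Hom.comm_e, hie, he']⟩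
      rw [← himg] at hj hj'
      obtain ⟨a, -, rfl⟩ := hj
      obtain ⟨a', -, rfl⟩ := hj'
      exact congrArg (IncHG.Hom.fI φ) (iI h)
    · have hsub := c6 (H.vmap j) (H.emap j) (fun i hi => hcase ⟨i, hi⟩)
      exact hsub ⟨rfl, rfl⟩ ⟨hv'.symm, he'.symm⟩
end

section
/- For an incidence hypergraph G, the partial-morphism-representer embedding η_G : G → G̃ is an essential monomorphism if and only if G is the empty (initial) incidence hypergraph. -/
open CategoryTheory Limits

lemma IncHG.mono_of_inj {G H : IncHG} (f : G ⟶ H)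
    (hV : Function.Injective f.fV) (hE : Function.Injective f.fE)
    (hI : Function.Injective f.fI) : Mono f := by
  constructor
  intro Z g h eq
  have eV : f.fV ∘ g.fV = f.fV ∘ h.fV := congrArg IncHG.Hom.fV eq
  have eE : f.fE ∘ g.fE = f.fE ∘ h.fE := congrArg IncHG.Hom.fE eq
  have eI : f.fI ∘ g.fI = f.fI ∘ h.fI := congrArg IncHG.Hom.fI eq
  exact IncHG.Hom.ext (funext fun x => hV (congrFun eV x))
    (funext fun x => hE (congrFun eE x)) (funext fun x => hI (congrFun eI x))

/-- `η_G : G ⟶ G̃` is an essential monomorphism iff `G` is the empty (initial)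
incidence hypergraph. -/
theorem etaIH_essential_iff_empty (G : IncHG) :
    IncHG.Essential (etaIH G) ↔ (IsEmpty G.V ∧ IsEmpty G.E ∧ IsEmpty G.I) := by
  constructor
  · intro hEss
    have hV : IsEmpty G.V := by
      constructor
      intro v
      -- collapse the new vertex onto `v`
      let K : IncHG := ⟨G.V, Option G.E, (tildeIH G).I,
        fun a => ((tildeIH G).vmap a).getD v, (tildeIH G).emap⟩
      let α : tildeIH G ⟶ K := ⟨fun o => o.getD v, id, id,
        fun _ => rfl, fun _ => rfl⟩
      have hmono : Mono (etaIH G ≫ α) := by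
        apply IncHG.mono_of_inj
        · intro a b h; exact h
        · intro a b h; exact Option.some_injective _ h
        · intro a b h; exact Sum.inl_injective h
      have hα : Mono α := hEss K α hmono
      -- probe with a single-vertex object
      let P : IncHG := ⟨Unit, Empty, Empty, Empty.elim, Empty.elim⟩
      let g₁ : P ⟶ tildeIH G := ⟨fun _ => some v, Empty.elim, Empty.elim,
        fun i => i.elim, fun i => i.elim⟩
      let g₂ : P ⟶ tildeIH G := ⟨fun _ => none, Empty.elim, Empty.elim,
        fun i => i.elim, fun i => i.elim⟩
      have hcomp : g₁ ≫ α = g₂ ≫ α := by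
        exact IncHG.Hom.ext rfl (funext fun x => x.elim) (funext fun x => x.elim)
      have := (cancel_mono α).mp hcomp
      have : (some v : Option G.V) = none := congrFun (congrArg IncHG.Hom.fV this) ()
      exact Option.some_ne_none v this
    have hE : IsEmpty G.E := by
      constructor
      intro e
      let K : IncHG := ⟨Option G.V, G.E, (tildeIH G).I,
        (tildeIH G).vmap, fun a => ((tildeIH G).emap a).getD e⟩
      let α : tildeIH G ⟶ K := ⟨id, fun o => o.getD e, id,
        fun _ => rfl, fun _ => rfl⟩
      have hmono : Mono (etaIH G ≫ α) := by
        apply IncHG.mono_of_inj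
        · intro a b h; exact Option.some_injective _ h
        · intro a b h; exact h
        · intro a b h; exact Sum.inl_injective h
      have hα : Mono α := hEss K α hmono
      let P : IncHG := ⟨Empty, Unit, Empty, Empty.elim, Empty.elim⟩
      let g₁ : P ⟶ tildeIH G := ⟨Empty.elim, fun _ => some e, Empty.elim,
        fun i => i.elim, fun i => i.elim⟩
      let g₂ : P ⟶ tildeIH G := ⟨Empty.elim, fun _ => none, Empty.elim,
        fun i => i.elim, fun i => i.elim⟩
      have hcomp : g₁ ≫ α = g₂ ≫ α := by
        exact IncHG.Hom.ext (funext fun x => x.elim) rfl (funext fun x => x.elim)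
      have := (cancel_mono α).mp hcomp
      have : (some e : Option G.E) = none := congrFun (congrArg IncHG.Hom.fE this) ()
      exact Option.some_ne_none e this
    exact ⟨hV, hE, ⟨fun i => hV.false (G.vmap i)⟩⟩
  · rintro ⟨hV, hE, hI⟩ K α _
    apply IncHG.mono_of_inj
    · intro a b _
      cases a with
      | none => cases b with
        | none => rfl
        | some x => exact (hV.false x).elim
      | some x => exact (hV.false x).elim
    · intro a b _
      cases a with
      | none => cases b with
        | none => rfl
        | some x => exact (hE.false x).elim
      | some x => exact (hE.false x).elim
    · intro a b _
      cases a with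
      | inl i => exact (hI.false i).elim
      | inr p => cases b with
        | inl i => exact (hI.false i).elim
        | inr q =>
          cases p with
          | mk p1 p2 => cases q with
            | mk q1 q2 =>
              cases p1 with
              | none => cases q1 with
                | none =>
                  cases p2 with
                  | none => cases q2 with
                    | none => rfl
                    | some x => exact (hE.false x).elim
                  | some x => exact (hE.false x).elim
                | some x => exact (hV.false x).elim
              | some x => exact (hV.false x).elim
end

section
/- For any incidence hypergraph G, the loading L(G) — obtained from G by adding a vertex if V(G) is empty, adding an edge if E(G) is empty, and adding exactly one new incidence between each vertex-edge pair (v,e) with inc_G(v,e) = ∅ — together with the inclusion j_G : G → L(G), is an injective envelope of G: j_G is an essential monomorphism and L(G) is injective with respect to monomorphisms. -/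
open CategoryTheory Limits

/-- The vertex set of the loading: `G`'s vertices, plus one new vertex exactly
when `V(G)` is empty. -/
def loadV (G : IncHG) : Type := G.V ⊕ PLift (IsEmpty G.V)

/-- The edge set of the loading: `G`'s edges, plus one new edge exactly when `E(G)`
is empty. -/
def loadE (G : IncHG) : Type := G.E ⊕ PLift (IsEmpty G.E)

/-- The loading `L(G)`: add a vertex if `V(G)` is empty, an edge if `E(G)` is empty,
and exactly one new incidence for each vertex-edge pair having no incidence. -/
def loadIH (G : IncHG) : IncHG where
  V := loadV G
  E := loadE G
  I := G.I ⊕ {p : loadV G × loadE G //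
        ¬ ∃ i : G.I, Sum.inl (G.vmap i) = p.1 ∧ Sum.inl (G.emap i) = p.2}
  vmap := fun a => match a with | .inl i => .inl (G.vmap i) | .inr p => p.1.1
  emap := fun a => match a with | .inl i => .inl (G.emap i) | .inr p => p.1.2

/-- The canonical inclusion `j_G : G ⟶ L(G)`. -/
def jIH (G : IncHG) : G ⟶ loadIH G :=
  ⟨Sum.inl, Sum.inl, Sum.inl, fun _ => rfl, fun _ => rfl⟩

/-! Monomorphisms of incidence hypergraphs are the componentwise injective morphisms.
A morphism out of `L(G)` that is injective on `G` is injective on `L(G)`: the added vertex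
(edge) exists only when `G` has none, and an added incidence is determined by its endpoints,
which bound no incidence of `G`. Every vertex and edge of `L(G)` bound an incidence, so a
morphism into `L(G)` extends along a monomorphism by sending each incidence outside the image
to an incidence between the images of its endpoints. -/

theorem Function.Injective.of_comp_inl_plift_isEmpty {α γ : Type*}
    {f : α ⊕ PLift (IsEmpty α) → γ} (hf : Function.Injective (f ∘ Sum.inl)) :
    Function.Injective f := by
  rintro (a | h) (b | h') hab
  · exact congrArg Sum.inl (hf hab)
  · exact (h'.down.false a).elim
  · exact (h.down.false b).elim
  · exact congrArg Sum.inr (Subsingleton.elim h h')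

theorem nonempty_sum_plift_isEmpty (α : Type*) : Nonempty (α ⊕ PLift (IsEmpty α)) := by
  by_cases h : IsEmpty α
  · exact ⟨.inr ⟨h⟩⟩
  · exact ⟨.inl (not_isEmpty_iff.1 h).some⟩

namespace IncHG

theorem mono_of_injective {G H : IncHG} (f : G ⟶ H) (hV : Function.Injective f.fV)
    (hE : Function.Injective f.fE) (hI : Function.Injective f.fI) : Mono f :=
  ⟨fun _ _ hgh => Hom.ext
    (funext fun x => hV (congrFun (congrArg Hom.fV hgh) x))
    (funext fun x => hE (congrFun (congrArg Hom.fE hgh) x))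
    (funext fun x => hI (congrFun (congrArg Hom.fI hgh) x))⟩

section MonoInjective

variable {G H : IncHG} (f : G ⟶ H) [Mono f]

/- Each component of a monomorphism is injective: test it against the hypergraphs with
a single vertex, a single edge, and a single incidence. -/

theorem injective_fV_of_mono_s12 : Function.Injective f.fV := by
  intro a b hab
  let point (v : G.V) : (⟨PUnit, PEmpty, PEmpty, PEmpty.elim, PEmpty.elim⟩ : IncHG) ⟶ G :=
    ⟨fun _ => v, PEmpty.elim, PEmpty.elim, (·.elim), (·.elim)⟩
  have h : point a = point b := (cancel_mono f).1 <|
    Hom.ext (funext fun _ => hab) (funext (·.elim)) (funext (·.elim))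
  exact congrFun (congrArg Hom.fV h) PUnit.unit

theorem injective_fE_of_mono_s12 : Function.Injective f.fE := by
  intro a b hab
  let point (e : G.E) : (⟨PEmpty, PUnit, PEmpty, PEmpty.elim, PEmpty.elim⟩ : IncHG) ⟶ G :=
    ⟨PEmpty.elim, fun _ => e, PEmpty.elim, (·.elim), (·.elim)⟩
  have h : point a = point b := (cancel_mono f).1 <|
    Hom.ext (funext (·.elim)) (funext fun _ => hab) (funext (·.elim))
  exact congrFun (congrArg Hom.fE h) PUnit.unit

theorem injective_fI_of_mono : Function.Injective f.fI := by
  intro a b hab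
  let point (i : G.I) : (⟨PUnit, PUnit, PUnit, id, id⟩ : IncHG) ⟶ G :=
    ⟨fun _ => G.vmap i, fun _ => G.emap i, fun _ => i, fun _ => rfl, fun _ => rfl⟩
  have h : point a = point b := (cancel_mono f).1 <| Hom.ext
    (funext fun _ => (f.comm_v a).symm.trans ((congrArg H.vmap hab).trans (f.comm_v b)))
    (funext fun _ => (f.comm_e a).symm.trans ((congrArg H.emap hab).trans (f.comm_e b)))
    (funext fun _ => hab)
  exact congrFun (congrArg Hom.fI h) PUnit.unit

end MonoInjective

theorem injective_of_forall_incidence {H : IncHG} (hV : Nonempty H.V) (hE : Nonempty H.E)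
    (hinc : ∀ v e, ∃ i, H.vmap i = v ∧ H.emap i = e) : Injective H := by
  choose σ hσv hσe using hinc
  refine ⟨fun {X Y} g f _ => ?_⟩
  let fV := Function.extend f.fV g.fV fun _ => hV.some
  let fE := Function.extend f.fE g.fE fun _ => hE.some
  let fI := Function.extend f.fI g.fI fun i => σ (fV (Y.vmap i)) (fE (Y.emap i))
  have extend_fV (x : X.V) : fV (f.fV x) = g.fV x := (injective_fV_of_mono_s12 f).extend_apply _ _ x
  have extend_fE (x : X.E) : fE (f.fE x) = g.fE x := (injective_fE_of_mono_s12 f).extend_apply _ _ x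
  have extend_fI (x : X.I) : fI (f.fI x) = g.fI x := (injective_fI_of_mono f).extend_apply _ _ x
  have new_fI (i : Y.I) (hi : ¬∃ x, f.fI x = i) : fI i = σ (fV (Y.vmap i)) (fE (Y.emap i)) :=
    Function.extend_apply' _ _ _ hi
  have comm_v (i : Y.I) : H.vmap (fI i) = fV (Y.vmap i) := by
    by_cases hi : ∃ x, f.fI x = i
    · obtain ⟨x, rfl⟩ := hi
      rw [extend_fI, g.comm_v, f.comm_v, extend_fV]
    · rw [new_fI i hi, hσv]
  have comm_e (i : Y.I) : H.emap (fI i) = fE (Y.emap i) := by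
    by_cases hi : ∃ x, f.fI x = i
    · obtain ⟨x, rfl⟩ := hi
      rw [extend_fI, g.comm_e, f.comm_e, extend_fE]
    · rw [new_fI i hi, hσe]
  exact ⟨⟨fV, fE, fI, comm_v, comm_e⟩,
    Hom.ext (funext extend_fV) (funext extend_fE) (funext extend_fI)⟩

end IncHG

theorem loadIH_exists_incidence (G : IncHG) (v : (loadIH G).V) (e : (loadIH G).E) :
    ∃ i, (loadIH G).vmap i = v ∧ (loadIH G).emap i = e := by
  by_cases h : ∃ i : G.I, Sum.inl (G.vmap i) = v ∧ Sum.inl (G.emap i) = e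
  · obtain ⟨i, hv, he⟩ := h
    exact ⟨.inl i, hv, he⟩
  · exact ⟨.inr ⟨(v, e), h⟩, rfl, rfl⟩

theorem loadIH_eq_inr_of_endpoints {G : IncHG} (i : (loadIH G).I)
    (p : {p : loadV G × loadE G //
      ¬ ∃ i : G.I, Sum.inl (G.vmap i) = p.1 ∧ Sum.inl (G.emap i) = p.2})
    (hv : (loadIH G).vmap i = p.1.1) (he : (loadIH G).emap i = p.1.2) : i = .inr p := by
  rcases i with i | q
  · exact (p.2 ⟨i, hv, he⟩).elim
  · exact congrArg Sum.inr (Subtype.ext (Prod.ext hv he))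

theorem essential_jIH (G : IncHG) : IncHG.Essential (jIH G) := by
  intro K α _
  have hV : Function.Injective α.fV :=
    .of_comp_inl_plift_isEmpty (IncHG.injective_fV_of_mono_s12 (jIH G ≫ α))
  have hE : Function.Injective α.fE :=
    .of_comp_inl_plift_isEmpty (IncHG.injective_fE_of_mono_s12 (jIH G ≫ α))
  have endpoints_eq {x y : (loadIH G).I} (h : α.fI x = α.fI y) :
      (loadIH G).vmap x = (loadIH G).vmap y ∧ (loadIH G).emap x = (loadIH G).emap y :=
    ⟨hV (by rw [← α.comm_v, ← α.comm_v, h]), hE (by rw [← α.comm_e, ← α.comm_e, h])⟩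
  refine IncHG.mono_of_injective α hV hE ?_
  rintro (a | p) y h
  · rcases y with b | q
    · exact congrArg Sum.inl (IncHG.injective_fI_of_mono (jIH G ≫ α) h)
    · exact loadIH_eq_inr_of_endpoints _ q (endpoints_eq h).1 (endpoints_eq h).2
  · exact (loadIH_eq_inr_of_endpoints y p (endpoints_eq h).1.symm (endpoints_eq h).2.symm).symm

/-- The loading `L(G)` with the inclusion `j_G` is an injective envelope of `G`:
`j_G` is an essential monomorphism and `L(G)` is injective with respect to
monomorphisms. -/
theorem loadIH_injectiveEnvelope (G : IncHG) :
    Mono (jIH G) ∧ IncHG.Essential (jIH G) ∧ Injective (loadIH G) :=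
  ⟨IncHG.mono_of_injective _ Sum.inl_injective Sum.inl_injective Sum.inl_injective,
    essential_jIH G,
    IncHG.injective_of_forall_incidence (nonempty_sum_plift_isEmpty G.V)
      (nonempty_sum_plift_isEmpty G.E) (loadIH_exists_incidence G)⟩
end

section
/- For the power hypergraph Pwr(G) — whose vertices are subsets of V(G), whose edges are subsets of E(G), whose incidences are the subhypergraphs K of G with ς(K) = V(K) and ω(K) = E(K) — and the evaluation morphism elem_G : G × Pwr(G) → Ω, the pair (Pwr(G), elem_G) is a power object: for every morphism φ : G × K → Ω there is a unique morphism φ̂ : K → Pwr(G) with elem_G ∘ (id_G × φ̂) = φ. -/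
open CategoryTheory Limits

/-- A subhypergraph of `G`. -/
structure IncHG.Sub (G : IncHG) where
  V' : Set G.V
  E' : Set G.E
  I' : Set G.I
  closed_v : ∀ i ∈ I', G.vmap i ∈ V'
  closed_e : ∀ i ∈ I', G.emap i ∈ E'

/-- The power hypergraph `Pwr(G)`: vertices are vertex subsets, edges are edge
subsets, incidences are subhypergraphs of `G`, with structure maps `K ↦ V(K)` and
`K ↦ E(K)`. -/
def PwrIH (G : IncHG) : IncHG where
  V := Set G.V
  E := Set G.E
  I := IncHG.Sub G
  vmap := fun K => K.V'
  emap := fun K => K.E'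

/-- The (categorical) product of two incidence hypergraphs, computed componentwise. -/
def prodIH (G K : IncHG) : IncHG where
  V := G.V × K.V
  E := G.E × K.E
  I := G.I × K.I
  vmap := fun p => (G.vmap p.1, K.vmap p.2)
  emap := fun p => (G.emap p.1, K.emap p.2)

/-- `id_G × f` on products. -/
def prodHom (G : IncHG) {A B : IncHG} (f : A ⟶ B) : prodIH G A ⟶ prodIH G B where
  fV := fun p => (p.1, IncHG.Hom.fV f p.2)
  fE := fun p => (p.1, IncHG.Hom.fE f p.2)
  fI := fun p => (p.1, IncHG.Hom.fI f p.2)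
  comm_v := fun p => by simp [prodIH, IncHG.Hom.comm_v]
  comm_e := fun p => by simp [prodIH, IncHG.Hom.comm_e]

/-- The membership evaluation morphism `elem_G : G × Pwr(G) ⟶ Ω`. -/
noncomputable def elemIH (G : IncHG) : prodIH G (PwrIH G) ⟶ OmegaIH := by
  classical
  exact
    { fV := fun p : G.V × Set G.V => decide (p.1 ∈ p.2)
      fE := fun p : G.E × Set G.E => decide (p.1 ∈ p.2)
      fI := fun p =>
        if p.1 ∈ p.2.I' then none
        else some (decide (G.vmap p.1 ∈ p.2.V'), decide (G.emap p.1 ∈ p.2.E'))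
      comm_v := fun p => by
        by_cases h : p.1 ∈ p.2.I'
        · simp [prodIH, PwrIH, OmegaIH, h, p.2.closed_v _ h]
        · simp [prodIH, PwrIH, OmegaIH, h] <;> first | congr | exact decide_eq_decide.mpr Iff.rfl
      comm_e := fun p => by
        by_cases h : p.1 ∈ p.2.I'
        · simp [prodIH, PwrIH, OmegaIH, h, p.2.closed_e _ h]
        · simp [prodIH, PwrIH, OmegaIH, h] <;> first | congr | exact decide_eq_decide.mpr Iff.rfl }


open CategoryTheory Limits

/-! A morphism into `Ω` is determined by which vertices, edges and incidences it sends to the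
true ones: the image of a false incidence is pinned down by the images of its endpoints. So
`φ : G × K ⟶ Ω` amounts to choosing, for every vertex, edge and incidence of `K`, a set of
vertices, a set of edges and a subhypergraph of `G`, compatibly with the structure maps —
which is exactly a morphism `K ⟶ Pwr(G)`. -/

lemma IncHG.Sub.ext {G : IncHG} {A B : G.Sub}
    (hV : A.V' = B.V') (hE : A.E' = B.E') (hI : A.I' = B.I') : A = B := by
  cases A; cases B; cases hV; cases hE; cases hI; rfl

lemma OmegaIH.inc_ext {x y : OmegaIH.I} (hnone : x = none ↔ y = none)
    (hv : OmegaIH.vmap x = OmegaIH.vmap y) (he : OmegaIH.emap x = OmegaIH.emap y) : x = y := by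
  rcases x with _ | ⟨a, b⟩ <;> rcases y with _ | ⟨c, d⟩ <;> simp_all [OmegaIH]

lemma OmegaIH.hom_ext {X : IncHG} {α β : X ⟶ OmegaIH}
    (hV : ∀ v, α.fV v = true ↔ β.fV v = true) (hE : ∀ e, α.fE e = true ↔ β.fE e = true)
    (hI : ∀ i, α.fI i = none ↔ β.fI i = none) : α = β := by
  have hV' : α.fV = β.fV := funext fun v => Bool.eq_iff_iff.mpr (hV v)
  have hE' : α.fE = β.fE := funext fun e => Bool.eq_iff_iff.mpr (hE e)
  refine IncHG.Hom.ext hV' hE' (funext fun i => OmegaIH.inc_ext (hI i) ?_ ?_)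
  · rw [α.comm_v, β.comm_v, hV']
  · rw [α.comm_e, β.comm_e, hE']

section Elem

variable {G : IncHG}

@[simp]
lemma elemIH_fV_eq_true (v : G.V) (S : Set G.V) : (elemIH G).fV (v, S) = true ↔ v ∈ S := by
  classical exact decide_eq_true_iff

@[simp]
lemma elemIH_fE_eq_true (e : G.E) (S : Set G.E) : (elemIH G).fE (e, S) = true ↔ e ∈ S := by
  classical exact decide_eq_true_iff

@[simp]
lemma elemIH_fI_eq_none (i : G.I) (H : G.Sub) : (elemIH G).fI (i, H) = none ↔ i ∈ H.I' := by
  classical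
  change (if i ∈ H.I' then _ else _) = none ↔ _
  split_ifs with h <;> simp [h]

end Elem

section Transpose

variable {G K : IncHG} (φ : prodIH G K ⟶ OmegaIH)

def classifiedSub (j : K.I) : G.Sub where
  V' := {v | φ.fV (v, K.vmap j) = true}
  E' := {e | φ.fE (e, K.emap j) = true}
  I' := {i | φ.fI (i, j) = none}
  closed_v i hi := by
    have h := φ.comm_v (i, j)
    rw [show φ.fI (i, j) = none from hi] at h
    exact h.symm
  closed_e i hi := by
    have h := φ.comm_e (i, j)
    rw [show φ.fI (i, j) = none from hi] at h
    exact h.symm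

def powerTranspose : K ⟶ PwrIH G where
  fV k := {v | φ.fV (v, k) = true}
  fE k := {e | φ.fE (e, k) = true}
  fI := classifiedSub φ
  comm_v _ := rfl
  comm_e _ := rfl

lemma powerTranspose_comp_elemIH : prodHom G (powerTranspose φ) ≫ elemIH G = φ :=
  OmegaIH.hom_ext (fun ⟨_, _⟩ => elemIH_fV_eq_true _ _) (fun ⟨_, _⟩ => elemIH_fE_eq_true _ _)
    (fun ⟨_, _⟩ => elemIH_fI_eq_none _ _)

lemma eq_powerTranspose (ψ : K ⟶ PwrIH G) : ψ = powerTranspose (prodHom G ψ ≫ elemIH G) := by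
  have hV : ψ.fV = (powerTranspose (prodHom G ψ ≫ elemIH G)).fV := by
    funext k
    exact Set.ext fun v => (elemIH_fV_eq_true v (ψ.fV k)).symm
  have hE : ψ.fE = (powerTranspose (prodHom G ψ ≫ elemIH G)).fE := by
    funext k
    exact Set.ext fun e => (elemIH_fE_eq_true e (ψ.fE k)).symm
  refine IncHG.Hom.ext hV hE (funext fun j => IncHG.Sub.ext ?_ ?_ ?_)
  · exact (ψ.comm_v j).trans (congrFun hV (K.vmap j))
  · exact (ψ.comm_e j).trans (congrFun hE (K.emap j))
  · exact Set.ext fun i => (elemIH_fI_eq_none i (ψ.fI j)).symm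

end Transpose

/-- `(Pwr(G), elem_G)` is a power object: every `φ : G × K ⟶ Ω` factors uniquely as
`elem_G ∘ (id_G × φ̂)` for a unique `φ̂ : K ⟶ Pwr(G)`. -/
theorem pwrIH_powerObject (G K : IncHG) (φ : prodIH G K ⟶ OmegaIH) :
    ∃! φh : K ⟶ PwrIH G, prodHom G φh ≫ elemIH G = φ :=
  ⟨powerTranspose φ, powerTranspose_comp_elemIH φ, fun ψ hψ => hψ ▸ eq_powerTranspose ψ⟩
end

section
/- For a morphism φ : G → H of incidence hypergraphs, the induced power map Pwr(φ) : Pwr(H) → Pwr(G) acts on vertices by S ↦ φ_V⁻¹(S), on edges by T ↦ φ_E⁻¹(T), and on incidences by sending a subhypergraph K of H to the subhypergraph of G generated by φ_V⁻¹(V(K)), φ_E⁻¹(E(K)), φ_I⁻¹(I(K)); in particular this triple of assignments defines a valid incidence hypergraph homomorphism Pwr(H) → Pwr(G). -/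
open CategoryTheory Limits

/-- For a morphism `φ : G ⟶ H`, there is a power map `Pwr(φ) : Pwr(H) ⟶ Pwr(G)`
acting by preimage on vertex subsets and edge subsets, and sending a subhypergraph `K`
of `H` to the subhypergraph of `G` generated by the preimages of `V(K)`, `E(K)`,
`I(K)` (whose vertex set is `φ_V⁻¹(V(K)) ∪ ς_G(φ_I⁻¹(I(K)))`, edge set
`φ_E⁻¹(E(K)) ∪ ω_G(φ_I⁻¹(I(K)))`, and incidence set `φ_I⁻¹(I(K))`). -/
theorem pwr_map (G H : IncHG) (φ : G ⟶ H) :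
    ∃ ψ : PwrIH H ⟶ PwrIH G,
      (∀ S : Set H.V, IncHG.Hom.fV ψ S = IncHG.Hom.fV φ ⁻¹' S) ∧
      (∀ T : Set H.E, IncHG.Hom.fE ψ T = IncHG.Hom.fE φ ⁻¹' T) ∧
      (∀ K : IncHG.Sub H,
        (IncHG.Hom.fI ψ K).V' =
          (IncHG.Hom.fV φ ⁻¹' K.V') ∪ G.vmap '' (IncHG.Hom.fI φ ⁻¹' K.I') ∧
        (IncHG.Hom.fI ψ K).E' =
          (IncHG.Hom.fE φ ⁻¹' K.E') ∪ G.emap '' (IncHG.Hom.fI φ ⁻¹' K.I') ∧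
        (IncHG.Hom.fI ψ K).I' = IncHG.Hom.fI φ ⁻¹' K.I') := by
  refine ⟨⟨fun S => IncHG.Hom.fV φ ⁻¹' S, fun T => IncHG.Hom.fE φ ⁻¹' T,
    fun K => ⟨(IncHG.Hom.fV φ ⁻¹' K.V') ∪ G.vmap '' (IncHG.Hom.fI φ ⁻¹' K.I'),
      (IncHG.Hom.fE φ ⁻¹' K.E') ∪ G.emap '' (IncHG.Hom.fI φ ⁻¹' K.I'),
      IncHG.Hom.fI φ ⁻¹' K.I',
      fun i hi => Or.inr ⟨i, hi, rfl⟩,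
      fun i hi => Or.inr ⟨i, hi, rfl⟩⟩,
    ?_, ?_⟩, fun _ => rfl, fun _ => rfl, fun K => ⟨rfl, rfl, rfl⟩⟩
  · intro K
    show (IncHG.Hom.fV φ ⁻¹' K.V') ∪ G.vmap '' (IncHG.Hom.fI φ ⁻¹' K.I')
        = IncHG.Hom.fV φ ⁻¹' K.V'
    refine Set.union_eq_self_of_subset_right ?_
    rintro v ⟨i, hi, rfl⟩
    show IncHG.Hom.fV φ (G.vmap i) ∈ K.V'
    rw [← φ.comm_v]
    exact K.closed_v _ hi
  · intro K
    show (IncHG.Hom.fE φ ⁻¹' K.E') ∪ G.emap '' (IncHG.Hom.fI φ ⁻¹' K.I')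
        = IncHG.Hom.fE φ ⁻¹' K.E'
    refine Set.union_eq_self_of_subset_right ?_
    rintro e ⟨i, hi, rfl⟩
    show IncHG.Hom.fE φ (G.emap i) ∈ K.E'
    rw [← φ.comm_e]
    exact K.closed_e _ hi
end
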